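/- Consider the maps s, t : ℝ³ → ℝ² given by s(x,y,z) = (x,z) and t(x,y,z) = (y, z − x·y). Identify W = {(u₁,u₂,u₃) ∈ (ℝ³)³ : s(u₁) = s(u₂), t(u₂) = t(u₃)} with ℝ⁵ via coordinates (x₁,y₁,z₁,y₂,x₃), so that p(x₁,y₁,z₁,y₂,x₃) = (x₁,y₁,z₁) and q(x₁,y₁,z₁,y₂,x₃) = (x₃, y₂, z₁ + (x₃ − x₁)y₂). Then for every point (x,y,z) ∈ ℝ³ with y ≠ 0, there is no map φ defined on any neighborhood of the point w₀ = (x,y,z,y,x) in ℝ⁵ with values in ℝ⁵ satisfying p ∘ φ = q, q ∘ φ = p, and φ(w₀) = w₀. -/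

import Mathlib

/-- Projection `p(x₁,y₁,z₁,y₂,x₃) = (x₁,y₁,z₁)`. -/
def pMap (w : ℝ × ℝ × ℝ × ℝ × ℝ) : ℝ × ℝ × ℝ :=
  (w.1, w.2.1, w.2.2.1)

/-- Projection `q(x₁,y₁,z₁,y₂,x₃) = (x₃, y₂, z₁ + (x₃ − x₁)·y₂)`. -/
def qMap (w : ℝ × ℝ × ℝ × ℝ × ℝ) : ℝ × ℝ × ℝ :=
  (w.2.2.2.2, w.2.2.2.1, w.2.2.1 + (w.2.2.2.2 - w.1) * w.2.2.2.1)

open Filter Topology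

/-- The `z`-correction `(x₃ - x₁) y₂` made by `q` and the `(x₁ - x₃) y₁` made by `q ∘ φ` must cancel. -/
theorem sub_mul_sub_eq_zero_of_pMap_eq_qMap {v w : ℝ × ℝ × ℝ × ℝ × ℝ}
    (hpq : pMap v = qMap w) (hqp : qMap v = pMap w) :
    (w.2.2.2.2 - w.1) * (w.2.2.2.1 - w.2.1) = 0 := by
  obtain ⟨x₁, y₁, z₁, y₂, x₃⟩ := w
  obtain ⟨a, b, c, d, e⟩ := v
  simp only [pMap, qMap, Prod.mk.injEq] at hpq hqp
  obtain ⟨rfl, rfl, rfl⟩ := hpq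
  obtain ⟨rfl, rfl, hz⟩ := hqp
  linear_combination hz

theorem statement13_general (x y z : ℝ) :
    ¬ ∃ (U : Set (ℝ × ℝ × ℝ × ℝ × ℝ)) (φ : ℝ × ℝ × ℝ × ℝ × ℝ → ℝ × ℝ × ℝ × ℝ × ℝ),
      IsOpen U ∧ (x, y, z, y, x) ∈ U ∧
      (∀ w ∈ U, pMap (φ w) = qMap w ∧ qMap (φ w) = pMap w) ∧
      φ (x, y, z, y, x) = (x, y, z, y, x) := by
  rintro ⟨U, φ, hU, hmem, hφ, -⟩
  let γ : ℝ → ℝ × ℝ × ℝ × ℝ × ℝ := fun t => (x, y, z, y + t, x + t)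
  have hγ : ∀ᶠ t in 𝓝 0, γ t ∈ U := by
    have hcont : Continuous γ := by fun_prop
    refine hcont.continuousAt.preimage_mem_nhds ?_
    simpa [γ] using hU.mem_nhds hmem
  have hγ' : ∀ᶠ t in 𝓝[≠] 0, γ t ∈ U ∧ t ≠ 0 :=
    (hγ.filter_mono nhdsWithin_le_nhds).and self_mem_nhdsWithin
  obtain ⟨t, htU, ht⟩ := hγ'.exists
  have key := sub_mul_sub_eq_zero_of_pMap_eq_qMap (hφ _ htU).1 (hφ _ htU).2
  simp only [γ, add_sub_cancel_left, mul_self_eq_zero] at key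
  exact ht key

/-- Example 5 of the paper, the contact distribution: for any
point `(x,y,z)` with `y ≠ 0`, there is no map `φ` on a neighborhood of
`w₀ = (x,y,z,y,x)` in `ℝ⁵` with `p ∘ φ = q`, `q ∘ φ = p` and `φ(w₀) = w₀`. -/
theorem statement13 (x y z : ℝ) (hy : y ≠ 0) :
    ¬ ∃ (U : Set (ℝ × ℝ × ℝ × ℝ × ℝ)) (φ : ℝ × ℝ × ℝ × ℝ × ℝ → ℝ × ℝ × ℝ × ℝ × ℝ),
      IsOpen U ∧ (x, y, z, y, x) ∈ U ∧
      (∀ w ∈ U, pMap (φ w) = qMap w ∧ qMap (φ w) = pMap w) ∧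
      φ (x, y, z, y, x) = (x, y, z, y, x) :=
  statement13_general x y z
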